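/- Let ω > 0, τ ∈ (0,1), ζ ∈ (0,1), and suppose each map x ↦ B_i(x) is continuous with symmetric positive definite values. Let {x^k} ⊂ ℝ^n be a sequence with d^k := d_ω(x^k) ≠ 0 for all k, such that x^{k+1} = x^k + λ_k d^k where λ_k is the largest number of the form ζ^j (j a nonnegative integer) satisfying the Armijo condition F_i(x^k + λ_k d^k) ≤ F_i(x^k) + λ_k τ θ_{x^k}(d^k) for all i = 1,…,m. If the level set {x ∈ ℝ^n : F_i(x) ≤ F_i(x^0) for all i = 1,…,m} is bounded, then {x^k} has at least one accumulation point, and every accumulation point of {x^k} is a Pareto stationary point. -/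

import Mathlib

open Filter Topology
open scoped RealInnerProductSpace

noncomputable section

/-- `Euc n` is Euclidean `n`-space `ℝ^n`. -/
abbrev Euc (n : ℕ) := EuclideanSpace ℝ (Fin n)

/-- `HasDirDeriv f x d D` : the one-sided directional derivative of `f` at `x`
in direction `d` exists and equals `D`, i.e. `(f (x + α • d) - f x)/α → D` as `α → 0⁺`. -/
def HasDirDeriv {n : ℕ} (f : Euc n → ℝ) (x d : Euc n) (D : ℝ) : Prop :=
  Filter.Tendsto (fun α : ℝ => (f (x + α • d) - f x) / α)
    (nhdsWithin 0 (Set.Ioi 0)) (nhds D)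

/-- `x` is Pareto stationary for the objectives `F i`:
for every direction `d`, `max_i F_i'(x; d) ≥ 0`, i.e. some objective has
nonnegative directional derivative in direction `d`. -/
def ParetoStationary {n m : ℕ} (F : Fin m → Euc n → ℝ) (x : Euc n) : Prop :=
  ∀ d : Euc n, ∃ i : Fin m, ∃ D : ℝ, HasDirDeriv (F i) x d D ∧ 0 ≤ D

/-- `θ_x(d) = max_i { ⟪∇g_i(x), d⟫ + ½⟪d, B_i(x) d⟫ + h_i(x+d) - h_i(x) }`. -/
def theta {n m : ℕ} (g h : Fin m → Euc n → ℝ)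
    (B : Fin m → Euc n → (Euc n →L[ℝ] Euc n)) (x d : Euc n) : ℝ :=
  ⨆ i : Fin m, (⟪gradient (g i) x, d⟫ + (1 / 2) * ⟪d, B i x d⟫ + h i (x + d) - h i x)

/-- `φ_{ω,x}(d) = θ_x(d) + (ω/2)‖d‖²`. -/
def phi {n m : ℕ} (g h : Fin m → Euc n → ℝ)
    (B : Fin m → Euc n → (Euc n →L[ℝ] Euc n)) (ω : ℝ) (x d : Euc n) : ℝ :=
  theta g h B x d + (ω / 2) * ‖d‖ ^ 2

/-!
Every Armijo step decreases all `F_i`, so the iterates stay in the bounded level set, which gives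
a cluster point `a`, and the decrements `λ_k τ θ_k` (with `θ_k = θ_{x^k}(d^k)`) tend to zero since
`F_1(x^k)` is decreasing and bounded below. On a bounded set the directions `d_ω(x)` are bounded,
so by the descent lemma for `g_i` and convexity of `h_i` the model `t θ_x(d)` predicts the decrease
of each `F_i` along `t d` up to `c t²`; hence a rejected trial step forces
`λ_k ≥ ζ min(1, (1 - τ)(-θ_k)/c)`. If `φ_{ω,a}(d_ω(a)) < 0`, continuity of `y ↦ φ_{ω,y}(d_ω(a))`
keeps `θ_k` uniformly negative along a subsequence, contradicting `λ_k θ_k → 0`. Finally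
`min φ_{ω,a} = 0` forbids a direction of first-order decrease for all `F_i`.
-/

open Set Metric

section Convex

variable {E : Type*} [NormedAddCommGroup E] [NormedSpace ℝ E] {f : E → ℝ}

lemma ConvexOn.map_add_smul_le (hf : ConvexOn ℝ univ f) (x v : E) {t : ℝ} (ht₀ : 0 ≤ t)
    (ht₁ : t ≤ 1) : f (x + t • v) ≤ f x + t * (f (x + v) - f x) := by
  have := hf.2 (mem_univ x) (mem_univ (x + v)) (sub_nonneg.2 ht₁) ht₀ (by ring)
  rw [show (1 - t) • x + t • (x + v) = x + t • v by module, smul_eq_mul, smul_eq_mul] at this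
  linarith

lemma ConvexOn.comp_add_smul (hf : ConvexOn ℝ univ f) (x v : E) :
    ConvexOn ℝ univ fun t : ℝ => f (x + t • v) := by
  refine ⟨convex_univ, fun a _ b _ s t hs ht hst => ?_⟩
  obtain rfl : t = 1 - s := by linarith
  convert hf.2 (mem_univ (x + a • v)) (mem_univ (x + b • v)) hs ht hst using 2
  module

lemma ConvexOn.exists_neg_mul_norm_le_sub [FiniteDimensional ℝ E] (hf : ConvexOn ℝ univ f)
    (R : ℝ) : ∃ C, 0 ≤ C ∧ ∀ y ∈ closedBall (0 : E) R, ∀ v, -(C * ‖v‖) ≤ f (y + v) - f y := by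
  obtain ⟨K, hK⟩ := hf.locallyLipschitz.locallyLipschitzOn.exists_lipschitzOnWith_of_compact
    (isCompact_closedBall (0 : E) (R + 1))
  refine ⟨K, K.coe_nonneg, fun y hy v => ?_⟩
  -- the step `t` keeps `y + t • v` in the ball where `f` is `K`-Lipschitz
  set t := 1 / (1 + ‖v‖)
  have ht₀ : 0 < t := by positivity
  have ht₁ : t ≤ 1 := div_le_one_of_le₀ (by linarith [norm_nonneg v]) (by positivity)
  have htv : ‖t • v‖ = t * ‖v‖ := by rw [norm_smul, Real.norm_of_nonneg ht₀.le]
  have hmem : y + t • v ∈ closedBall (0 : E) (R + 1) := by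
    have : t * ‖v‖ ≤ 1 := by
      rw [div_mul_eq_mul_div, one_mul, div_le_one (by positivity)]; linarith
    rw [mem_closedBall_zero_iff] at hy ⊢
    linarith [norm_add_le y (t • v)]
  have hlip : f y - f (y + t • v) ≤ K * (t * ‖v‖) := by
    have := hK.dist_le_mul y (closedBall_subset_closedBall (by linarith) hy) _ hmem
    rw [Real.dist_eq, dist_eq_norm, sub_add_cancel_left, norm_neg, htv] at this
    exact (le_abs_self _).trans this
  have hseg := hf.map_add_smul_le y v ht₀.le ht₁
  have : t * -(K * ‖v‖) ≤ t * (f (y + v) - f y) := by linarith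
  exact le_of_mul_le_mul_left this ht₀

end Convex

section Smooth

variable {F : Type*} [NormedAddCommGroup F] [InnerProductSpace ℝ F] [CompleteSpace F]
  {f : F → ℝ}

lemma DifferentiableAt.hasDerivAt_comp_add_smul {y v : F} {t : ℝ}
    (hf : DifferentiableAt ℝ f (y + t • v)) :
    HasDerivAt (fun s : ℝ => f (y + s • v)) ⟪gradient f (y + t • v), v⟫ t := by
  rw [inner_gradient_left]
  have hline : HasDerivAt (fun s : ℝ => y + s • v) v t := by
    simpa using ((hasDerivAt_id t).smul_const v).const_add y
  exact hf.hasFDerivAt.comp_hasDerivAt t hline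

lemma ContDiff.continuous_gradient (hf : ContDiff ℝ 1 f) : Continuous (gradient f) :=
  (InnerProductSpace.toDual ℝ F).symm.continuous.comp (hf.continuous_fderiv one_ne_zero)

lemma ContDiff.exists_lipschitzOnWith_gradient (hf : ContDiff ℝ 2 f) {s : Set F}
    (hs : Convex ℝ s) (hs' : IsCompact s) : ∃ K, LipschitzOnWith K (gradient f) s :=
  ((InnerProductSpace.toDual ℝ F).symm.contDiff.comp
    (hf.fderiv_right (m := 1) (by norm_num))).contDiffOn.exists_lipschitzOnWith one_ne_zero hs hs'

lemma le_add_inner_gradient_add_mul_sq (hf : Differentiable ℝ f) {s : Set F} (hs : Convex ℝ s)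
    {K : NNReal} (hK : LipschitzOnWith K (gradient f) s) {y v : F} (hy : y ∈ s)
    (hyv : y + v ∈ s) : f (y + v) ≤ f y + ⟪gradient f y, v⟫ + K * ‖v‖ ^ 2 := by
  obtain ⟨c, hc, hslope⟩ := exists_hasDerivAt_eq_slope (fun t : ℝ => f (y + t • v))
    (fun t => ⟪gradient f (y + t • v), v⟫) zero_lt_one
    (fun t _ => (hf _).hasDerivAt_comp_add_smul.continuousAt.continuousWithinAt)
    (fun t _ => (hf _).hasDerivAt_comp_add_smul)
  simp only [one_smul, zero_smul, add_zero, sub_zero, div_one] at hslope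
  have hyc : y + c • v ∈ s := by
    simpa using hs.add_smul_mem hy (by simpa using hyv) ⟨hc.1.le, hc.2.le⟩
  have hlip : ‖gradient f (y + c • v) - gradient f y‖ ≤ K * ‖v‖ := by
    have := hK.norm_sub_le hyc hy
    rw [add_sub_cancel_left, norm_smul, Real.norm_of_nonneg hc.1.le] at this
    exact this.trans (mul_le_mul_of_nonneg_left (mul_le_of_le_one_left (norm_nonneg v) hc.2.le)
      K.coe_nonneg)
  calc f (y + v) = f y + ⟪gradient f y, v⟫ + ⟪gradient f (y + c • v) - gradient f y, v⟫ := by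
        rw [inner_sub_left]; linarith
    _ ≤ f y + ⟪gradient f y, v⟫ + K * ‖v‖ * ‖v‖ := by
        gcongr
        exact (real_inner_le_norm _ _).trans (mul_le_mul_of_nonneg_right hlip (norm_nonneg v))
    _ = f y + ⟪gradient f y, v⟫ + K * ‖v‖ ^ 2 := by ring

end Smooth

section DirectionalDerivative

variable {n : ℕ} {f f' : Euc n → ℝ} {x d : Euc n}

lemma HasDerivWithinAt.hasDirDeriv {D : ℝ}
    (hf : HasDerivWithinAt (fun t : ℝ => f (x + t • d)) D (Ioi 0) 0) : HasDirDeriv f x d D := by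
  rw [hasDerivWithinAt_iff_tendsto_slope' self_notMem_Ioi] at hf
  refine hf.congr fun t => ?_
  simp [slope_def_field]

lemma DifferentiableAt.hasDirDeriv (hf : DifferentiableAt ℝ f x) (d : Euc n) :
    HasDirDeriv f x d ⟪gradient f x, d⟫ := by
  have hf' : DifferentiableAt ℝ f (x + (0 : ℝ) • d) := by simpa using hf
  simpa using hf'.hasDerivAt_comp_add_smul.hasDerivWithinAt.hasDirDeriv

lemma ConvexOn.exists_hasDirDeriv (hf : ConvexOn ℝ univ f) (x d : Euc n) :
    ∃ D, HasDirDeriv f x d D :=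
  ⟨_, ((hf.comp_add_smul x d).differentiableWithinAt_Ioi_of_mem_interior
    (by simp)).hasDerivWithinAt.hasDirDeriv⟩

lemma HasDirDeriv.add {D D' : ℝ} (hf : HasDirDeriv f x d D) (hf' : HasDirDeriv f' x d D') :
    HasDirDeriv (fun y => f y + f' y) x d (D + D') :=
  (Tendsto.add hf hf').congr fun α => by ring

end DirectionalDerivative

lemma tendsto_zero_of_le_add_of_bddBelow {u v : ℕ → ℝ} (hv : ∀ k, v k ≤ 0)
    (hu : ∀ k, u (k + 1) ≤ u k + v k) (hbdd : BddBelow (range u)) :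
    Tendsto v atTop (𝓝 0) := by
  have hanti : Antitone u := antitone_nat_of_succ_le fun k => by linarith [hu k, hv k]
  have hlim := tendsto_atTop_ciInf hanti hbdd
  have hdiff : Tendsto (fun k => u (k + 1) - u k) atTop (𝓝 0) := by
    simpa using (hlim.comp (tendsto_add_atTop_nat 1)).sub hlim
  exact tendsto_of_tendsto_of_tendsto_of_le_of_le hdiff tendsto_const_nhds
    (fun k => by linarith [hu k]) hv

/-- If every trial step `ζ ^ j > λ` fails the Armijo test for a model that overestimates the
decrease by at most `c t²`, then `λ / ζ` is not much smaller than `(1 - τ) (-θ) / c`. -/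
lemma le_of_armijo_fails {ζ τ θ c lam : ℝ} (hζ : ζ ∈ Ioo 0 1) (hc : 0 < c)
    (hform : ∃ j : ℕ, lam = ζ ^ j)
    (hfail : ∀ j : ℕ, lam < ζ ^ j → ζ ^ j * τ * θ < ζ ^ j * θ + c * (ζ ^ j) ^ 2) :
    ζ * min 1 ((1 - τ) * -θ / c) ≤ lam := by
  obtain ⟨j, rfl⟩ := hform
  cases j with
  | zero =>
    rw [pow_zero]
    exact (mul_le_of_le_one_right hζ.1.le (min_le_left _ _)).trans hζ.2.le
  | succ j =>
    have hpos : 0 < ζ ^ j := pow_pos hζ.1 j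
    have hfailj := hfail j (pow_lt_pow_right_of_lt_one₀ hζ.1 hζ.2 j.lt_succ_self)
    have hlt : (1 - τ) * -θ / c < ζ ^ j := by
      rw [div_lt_iff₀ hc]
      have : ζ ^ j * ((1 - τ) * -θ) < ζ ^ j * (ζ ^ j * c) := by linarith
      exact lt_of_mul_lt_mul_left this hpos.le
    calc ζ * min 1 ((1 - τ) * -θ / c) ≤ ζ * ((1 - τ) * -θ / c) :=
          mul_le_mul_of_nonneg_left (min_le_right _ _) hζ.1.le
      _ ≤ ζ ^ (j + 1) := by rw [pow_succ']; exact mul_le_mul_of_nonneg_left hlt.le hζ.1.le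

section ProximalQuasiNewton

def thetaTerm {n m : ℕ} (g h : Fin m → Euc n → ℝ) (B : Fin m → Euc n → (Euc n →L[ℝ] Euc n))
    (i : Fin m) (x d : Euc n) : ℝ :=
  ⟪gradient (g i) x, d⟫ + (1 / 2) * ⟪d, B i x d⟫ + h i (x + d) - h i x

variable {n m : ℕ} {g h : Fin m → Euc n → ℝ} {B : Fin m → Euc n → (Euc n →L[ℝ] Euc n)}
  {ω τ ζ : ℝ} {dω : Euc n → Euc n} {x : ℕ → Euc n} {lam : ℕ → ℝ}

lemma theta_eq_iSup (x d : Euc n) : theta g h B x d = ⨆ i, thetaTerm g h B i x d := rfl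

lemma thetaTerm_le_theta (i : Fin m) (x d : Euc n) : thetaTerm g h B i x d ≤ theta g h B x d :=
  le_ciSup (f := fun i => thetaTerm g h B i x d) (Set.finite_range _).bddAbove i

lemma theta_zero (x : Euc n) : theta g h B x 0 = 0 := by
  simp [theta]

lemma phi_nonpos_of_forall_le {x d₀ : Euc n} (hmin : ∀ d, phi g h B ω x d₀ ≤ phi g h B ω x d) :
    phi g h B ω x d₀ ≤ 0 :=
  (hmin 0).trans (by simp [phi, theta_zero])

lemma theta_nonpos_of_forall_le (hω : 0 ≤ ω) {x d₀ : Euc n}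
    (hmin : ∀ d, phi g h B ω x d₀ ≤ phi g h B ω x d) : theta g h B x d₀ ≤ 0 := by
  have := phi_nonpos_of_forall_le hmin
  rw [phi] at this
  nlinarith [sq_nonneg ‖d₀‖]

lemma continuous_theta [Nonempty (Fin m)] (hg : ∀ i, ContDiff ℝ 1 (g i))
    (hh : ∀ i, Continuous (h i)) (hB : ∀ i, Continuous (B i)) (d : Euc n) :
    Continuous fun x => theta g h B x d := by
  simp_rw [theta_eq_iSup, ← Finset.sup'_univ_eq_ciSup]
  refine Continuous.finset_sup'_apply _ fun i _ => ?_
  have := (hg i).continuous_gradient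
  have := hh i
  have := hB i
  unfold thetaTerm
  fun_prop

lemma tendsto_thetaTerm_smul_div {i : Fin m} {x d : Euc n} {Dh : ℝ}
    (hDh : HasDirDeriv (h i) x d Dh) :
    Tendsto (fun t => thetaTerm g h B i x (t • d) / t) (𝓝[>] 0)
      (𝓝 (⟪gradient (g i) x, d⟫ + Dh)) := by
  have hlin : Tendsto (fun t : ℝ => ⟪gradient (g i) x, d⟫ + t * ((1 / 2) * ⟪d, B i x d⟫)
      + (h i (x + t • d) - h i x) / t) (𝓝[>] 0)
      (𝓝 (⟪gradient (g i) x, d⟫ + 0 * ((1 / 2) * ⟪d, B i x d⟫) + Dh)) :=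
    (tendsto_const_nhds.add ((tendsto_nhdsWithin_of_tendsto_nhds tendsto_id).mul_const _)).add hDh
  rw [zero_mul, add_zero] at hlin
  refine hlin.congr' ?_
  filter_upwards [self_mem_nhdsWithin] with t (ht : 0 < t)
  simp only [thetaTerm, map_smul, real_inner_smul_left, real_inner_smul_right]
  field_simp
  ring

/-- `φ_{ω,x}(t d) / t → max_i F_i'(x; d)` as `t → 0⁺`. -/
lemma paretoStationary_of_phi_nonneg [Nonempty (Fin m)] {x : Euc n}
    (hg : ∀ i, DifferentiableAt ℝ (g i) x) (hh : ∀ i, ConvexOn ℝ univ (h i))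
    (hφ : ∀ d, 0 ≤ phi g h B ω x d) : ParetoStationary (fun i y => g i y + h i y) x := by
  intro d
  choose Dh hDh using fun i => (hh i).exists_hasDirDeriv x d
  by_contra! hneg
  have hD i : ⟪gradient (g i) x, d⟫ + Dh i < 0 :=
    hneg i _ (((hg i).hasDirDeriv d).add (hDh i))
  have hlim i : Tendsto (fun t => thetaTerm g h B i x (t • d) / t + t * (ω / 2 * ‖d‖ ^ 2))
      (𝓝[>] 0) (𝓝 (⟪gradient (g i) x, d⟫ + Dh i)) := by
    simpa using (tendsto_thetaTerm_smul_div (hDh i)).add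
      ((tendsto_nhdsWithin_of_tendsto_nhds tendsto_id).mul_const (ω / 2 * ‖d‖ ^ 2))
  obtain ⟨t, hnegt, ht⟩ := ((eventually_all.2 fun i => (hlim i).eventually (gt_mem_nhds (hD i))).and
    self_mem_nhdsWithin).exists
  obtain ⟨i, hi⟩ := exists_eq_ciSup_of_finite (f := fun i => thetaTerm g h B i x (t • d))
  have hti := mul_lt_mul_of_pos_left (hnegt i) (show (0 : ℝ) < t from ht)
  rw [mul_add, mul_div_cancel₀ _ (ne_of_gt ht), mul_zero] at hti
  have hφt := hφ (t • d)
  rw [phi, theta_eq_iSup, ← hi, norm_smul, Real.norm_of_nonneg (le_of_lt ht)] at hφt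
  linarith

lemma exists_norm_le_of_phi_nonpos (i : Fin m) (hg : ContDiff ℝ 1 (g i))
    (hh : ConvexOn ℝ univ (h i)) (hB : ∀ x d, 0 ≤ ⟪d, B i x d⟫) (hω : 0 < ω) (R : ℝ) :
    ∃ D, ∀ y ∈ closedBall (0 : Euc n) R, ∀ d, phi g h B ω y d ≤ 0 → ‖d‖ ≤ D := by
  obtain ⟨M, hM⟩ := (isCompact_closedBall (0 : Euc n) R).exists_bound_of_continuousOn
    hg.continuous_gradient.continuousOn
  obtain ⟨C, hC, hCh⟩ := hh.exists_neg_mul_norm_le_sub R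
  refine ⟨2 * (M + C) / ω, fun y hy d hφ => ?_⟩
  have hgrad : -(M * ‖d‖) ≤ ⟪gradient (g i) y, d⟫ :=
    neg_le_of_abs_le ((abs_real_inner_le_norm _ _).trans
      (mul_le_mul_of_nonneg_right (hM y hy) (norm_nonneg d)))
  have hterm := thetaTerm_le_theta (g := g) (h := h) (B := B) i y d
  have hB' := hB y d
  have hCd := hCh y hy d
  rw [phi] at hφ
  rw [thetaTerm] at hterm
  have hM0 : 0 ≤ M := (norm_nonneg _).trans (hM y hy)
  have hquad : ω / 2 * ‖d‖ ^ 2 ≤ (M + C) * ‖d‖ := by nlinarith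
  rw [le_div_iff₀ hω]
  rcases (norm_nonneg d).eq_or_lt with hd | hd
  · rw [← hd]; nlinarith
  · nlinarith

lemma exists_add_smul_le_add_theta (hg : ∀ i, ContDiff ℝ 2 (g i))
    (hh : ∀ i, ConvexOn ℝ univ (h i)) (hB : ∀ i x d, 0 ≤ ⟪d, B i x d⟫) (R D : ℝ) :
    ∃ c, 0 < c ∧ ∀ y ∈ closedBall (0 : Euc n) R, ∀ d, ‖d‖ ≤ D → ∀ t ∈ Icc (0 : ℝ) 1, ∀ i,
      g i (y + t • d) + h i (y + t • d) ≤ g i y + h i y + t * theta g h B y d + c * t ^ 2 := by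
  choose K hK using fun i => (hg i).exists_lipschitzOnWith_gradient
    (convex_closedBall (0 : Euc n) (R + D)) (isCompact_closedBall _ _)
  refine ⟨(∑ i, (K i : ℝ)) * D ^ 2 + 1, by positivity, fun y hy d hd t ht i => ?_⟩
  have htd : ‖t • d‖ ≤ ‖d‖ := by
    rw [norm_smul, Real.norm_of_nonneg ht.1]
    exact mul_le_of_le_one_left (norm_nonneg d) ht.2
  have hmem : ∀ v : Euc n, ‖v‖ ≤ D → y + v ∈ closedBall (0 : Euc n) (R + D) := fun v hv => by
    rw [mem_closedBall_zero_iff] at hy ⊢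
    linarith [norm_add_le y v]
  have hg_desc := le_add_inner_gradient_add_mul_sq ((hg i).differentiable two_ne_zero)
    (convex_closedBall _ _) (hK i)
    (closedBall_subset_closedBall (by linarith [(norm_nonneg d).trans hd]) hy)
    (hmem _ (htd.trans hd))
  rw [real_inner_smul_right] at hg_desc
  have hh_seg := (hh i).map_add_smul_le y d ht.1 ht.2
  have hmodel : ⟪gradient (g i) y, d⟫ + (h i (y + d) - h i y) ≤ theta g h B y d := by
    have := thetaTerm_le_theta (g := g) (h := h) (B := B) i y d
    rw [thetaTerm] at this
    linarith [hB i y d]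
  have hcurv : (K i : ℝ) * ‖t • d‖ ^ 2 ≤ ((∑ i, (K i : ℝ)) * D ^ 2 + 1) * t ^ 2 := by
    rw [norm_smul, Real.norm_of_nonneg ht.1]
    have hKi : (K i : ℝ) ≤ ∑ i, (K i : ℝ) :=
      Finset.single_le_sum (fun i _ => (K i).coe_nonneg) (Finset.mem_univ i)
    have hdD : ‖d‖ ^ 2 ≤ D ^ 2 := pow_le_pow_left₀ (norm_nonneg d) hd 2
    calc (K i : ℝ) * (t * ‖d‖) ^ 2 = (K i : ℝ) * ‖d‖ ^ 2 * t ^ 2 := by ring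
      _ ≤ (∑ i, (K i : ℝ)) * D ^ 2 * t ^ 2 := by gcongr
      _ ≤ _ := by nlinarith [sq_nonneg t]
  nlinarith [mul_le_mul_of_nonneg_left hmodel ht.1]

lemma exists_le_stepsize [Nonempty (Fin m)] (hg : ∀ i, ContDiff ℝ 2 (g i))
    (hh : ∀ i, ConvexOn ℝ univ (h i)) (hB : ∀ i x d, 0 ≤ ⟪d, B i x d⟫) (hω : 0 < ω)
    (hζ : ζ ∈ Ioo (0 : ℝ) 1) (hmin : ∀ y d, phi g h B ω y (dω y) ≤ phi g h B ω y d) {R : ℝ}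
    (hR : ∀ k, x k ∈ closedBall (0 : Euc n) R) (hlam_form : ∀ k, ∃ j : ℕ, lam k = ζ ^ j)
    (hlam_max : ∀ k (j : ℕ), lam k < ζ ^ j →
      ∃ i, g i (x k) + h i (x k) + ζ ^ j * τ * theta g h B (x k) (dω (x k))
        < g i (x k + ζ ^ j • dω (x k)) + h i (x k + ζ ^ j • dω (x k))) :
    ∃ c, 0 < c ∧ ∀ k, ζ * min 1 ((1 - τ) * -theta g h B (x k) (dω (x k)) / c) ≤ lam k := by
  let i₀ := Classical.arbitrary (Fin m)
  obtain ⟨D, hD⟩ := exists_norm_le_of_phi_nonpos i₀ ((hg i₀).of_le one_le_two) (hh i₀) (hB i₀)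
    hω R
  obtain ⟨c, hc, hdesc⟩ := exists_add_smul_le_add_theta hg hh hB R D
  refine ⟨c, hc, fun k => le_of_armijo_fails hζ hc (hlam_form k) fun j hj => ?_⟩
  obtain ⟨i, hi⟩ := hlam_max k j hj
  have := hdesc (x k) (hR k) _ (hD _ (hR k) _ (phi_nonpos_of_forall_le (hmin _))) (ζ ^ j)
    ⟨pow_nonneg hζ.1.le j, pow_le_one₀ hζ.1.le hζ.2.le⟩ i
  linarith

/-- If `φ_{ω,a}(d_ω(a)) < 0` at a cluster point `a`, continuity keeps `θ_k` below a negative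
constant along a subsequence; there the steps are bounded below, so the decrements
`λ_k τ θ_k` cannot tend to zero. -/
lemma phi_nonneg_of_mapClusterPt [Nonempty (Fin m)] (hg : ∀ i, ContDiff ℝ 1 (g i))
    (hh : ∀ i, Continuous (h i)) (hBcont : ∀ i, Continuous (B i)) (hω : 0 ≤ ω)
    (hτ : τ ∈ Ioo (0 : ℝ) 1) (hζ : 0 < ζ) (hmin : ∀ y d, phi g h B ω y (dω y) ≤ phi g h B ω y d)
    {c : ℝ} (hc : 0 < c)
    (hlower : ∀ k, ζ * min 1 ((1 - τ) * -theta g h B (x k) (dω (x k)) / c) ≤ lam k)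
    (htend : Tendsto (fun k => lam k * τ * theta g h B (x k) (dω (x k))) atTop (𝓝 0))
    {a : Euc n} (ha : MapClusterPt a atTop x) : 0 ≤ phi g h B ω a (dω a) := by
  by_contra! hneg
  obtain ⟨η, hη, hφa⟩ : ∃ η, 0 < η ∧ phi g h B ω a (dω a) < -η :=
    ⟨-phi g h B ω a (dω a) / 2, by linarith, by linarith⟩
  have hcont : Continuous fun y => phi g h B ω y (dω a) :=
    (continuous_theta hg hh hBcont _).add continuous_const
  have hnear : ∀ᶠ y in 𝓝 a, phi g h B ω y (dω a) < -η :=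
    hcont.continuousAt.eventually_lt continuousAt_const hφa
  have hfreq : ∃ᶠ k in atTop, theta g h B (x k) (dω (x k)) < -η :=
    (mapClusterPt_iff_frequently.mp ha _ hnear).mono fun k hk => by
      have := (hmin (x k) (dω a)).trans_lt hk
      rw [phi] at this
      nlinarith [sq_nonneg ‖dω (x k)‖]
  set δ := ζ * min 1 ((1 - τ) * η / c) with hδ_def
  have hδ : 0 < δ := mul_pos hζ (lt_min one_pos (div_pos (mul_pos (by linarith [hτ.2]) hη) hc))
  have hsmall : ∀ᶠ k in atTop, -(δ * τ * η) < lam k * τ * theta g h B (x k) (dω (x k)) :=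
    htend.eventually (lt_mem_nhds (neg_neg_of_pos (mul_pos (mul_pos hδ hτ.1) hη)))
  obtain ⟨k, hθk, hk⟩ := (hfreq.and_eventually hsmall).exists
  have hδk : δ ≤ lam k := by
    refine le_trans ?_ (hlower k)
    rw [hδ_def]
    gcongr <;> linarith [hτ.2]
  have hlamτ : 0 ≤ lam k * τ := mul_nonneg (hδ.le.trans hδk) hτ.1.le
  have h1 := mul_le_mul_of_nonneg_left hθk.le hlamτ
  have h2 : δ * τ * η ≤ lam k * τ * η := by gcongr; exact hτ.1.le
  linarith

end ProximalQuasiNewton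

theorem algorithm_one_bounded_level_set_general
    {n m : ℕ} (g h : Fin m → Euc n → ℝ)
    (B : Fin m → Euc n → (Euc n →L[ℝ] Euc n))
    (hm : 0 < m)
    (hg : ∀ i, ContDiff ℝ 2 (g i))
    (hh : ∀ i, ConvexOn ℝ Set.univ (h i))
    (hBpos : ∀ i x (d : Euc n), d ≠ 0 → 0 < ⟪d, B i x d⟫)
    (hBcont : ∀ i, Continuous (fun x => B i x))
    (ω τ ζ : ℝ) (hω : 0 < ω)
    (hτ : τ ∈ Set.Ioo (0 : ℝ) 1) (hζ : ζ ∈ Set.Ioo (0 : ℝ) 1)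
    (dω : Euc n → Euc n)
    (hmin : ∀ y d, phi g h B ω y (dω y) ≤ phi g h B ω y d)
    (x : ℕ → Euc n) (lam : ℕ → ℝ)
    (hstep : ∀ k, x (k + 1) = x k + lam k • dω (x k))
    (hlam_form : ∀ k, ∃ j : ℕ, lam k = ζ ^ j)
    (harm : ∀ k i,
      g i (x k + lam k • dω (x k)) + h i (x k + lam k • dω (x k))
        ≤ g i (x k) + h i (x k) + lam k * τ * theta g h B (x k) (dω (x k)))
    (hlam_max : ∀ k (j : ℕ), lam k < ζ ^ j →
      ∃ i, g i (x k) + h i (x k) + ζ ^ j * τ * theta g h B (x k) (dω (x k))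
        < g i (x k + ζ ^ j • dω (x k)) + h i (x k + ζ ^ j • dω (x k)))
    (hlevel : Bornology.IsBounded
      {y : Euc n | ∀ i, g i y + h i y ≤ g i (x 0) + h i (x 0)}) :
    (∃ a : Euc n, MapClusterPt a atTop x) ∧
      ∀ a : Euc n, MapClusterPt a atTop x →
        ParetoStationary (fun i y => g i y + h i y) a := by
  have : Nonempty (Fin m) := ⟨⟨0, hm⟩⟩
  have hB i y d : 0 ≤ ⟪d, B i y d⟫ := by
    rcases eq_or_ne d 0 with rfl | hd
    exacts [by simp, (hBpos i y d hd).le]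
  have hdecr k : lam k * τ * theta g h B (x k) (dω (x k)) ≤ 0 := by
    obtain ⟨j, hj⟩ := hlam_form k
    have hlam : 0 ≤ lam k := hj ▸ pow_nonneg hζ.1.le j
    exact mul_nonpos_of_nonneg_of_nonpos (mul_nonneg hlam hτ.1.le)
      (theta_nonpos_of_forall_le hω.le (hmin (x k)))
  have hF k i : g i (x (k + 1)) + h i (x (k + 1))
      ≤ g i (x k) + h i (x k) + lam k * τ * theta g h B (x k) (dω (x k)) :=
    hstep k ▸ harm k i
  have hlevel_mem k : ∀ i, g i (x k) + h i (x k) ≤ g i (x 0) + h i (x 0) := by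
    induction k with
    | zero => exact fun i => le_rfl
    | succ k ih => exact fun i => ((hF k i).trans (by linarith [hdecr k])).trans (ih i)
  obtain ⟨R, hR⟩ := hlevel.subset_closedBall 0
  refine ⟨?_, fun a ha => ?_⟩
  · obtain ⟨a, -, ψ, hψ, hlim⟩ := tendsto_subseq_of_bounded hlevel hlevel_mem
    exact ⟨a, hlim.mapClusterPt.of_comp hψ.tendsto_atTop⟩
  have hh_cont i : Continuous (h i) := (hh i).locallyLipschitz.continuous
  obtain ⟨c, hc, hlower⟩ := exists_le_stepsize hg hh hB hω hζ hmin
    (fun k => hR (hlevel_mem k)) hlam_form hlam_max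
  let i₀ : Fin m := ⟨0, hm⟩
  have htend := tendsto_zero_of_le_add_of_bddBelow hdecr (fun k => hF k i₀)
    (((isCompact_closedBall (0 : Euc n) R).bddBelow_image
      ((hg i₀).continuous.add (hh_cont i₀)).continuousOn).mono
      (range_subset_iff.2 fun k => mem_image_of_mem _ (hR (hlevel_mem k))))
  refine paretoStationary_of_phi_nonneg (fun i => (hg i).differentiable two_ne_zero a) hh
    fun d => le_trans ?_ (hmin a d)
  exact phi_nonneg_of_mapClusterPt (fun i => (hg i).of_le one_le_two) hh_cont hBcont hω.le hτ
    hζ.1 hmin hc hlower htend ha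

/-- with a bounded level set, the sequence generated by the
proximal quasi-Newton method with Armijo line searches has accumulation points,
and all of them are Pareto stationary. -/
theorem algorithm_one_bounded_level_set
    {n m : ℕ} (g h : Fin m → Euc n → ℝ)
    (B : Fin m → Euc n → (Euc n →L[ℝ] Euc n))
    (hm : 0 < m)
    (hg : ∀ i, ContDiff ℝ 2 (g i))
    (hsc : ∀ i, ∃ a : ℝ, 0 < a ∧ ∀ x y : Euc n,
      a * ‖x - y‖ ^ 2 ≤ ⟪gradient (g i) x - gradient (g i) y, x - y⟫)
    (hh : ∀ i, ConvexOn ℝ Set.univ (h i))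
    (hBsymm : ∀ i x (u v : Euc n), ⟪B i x u, v⟫ = ⟪u, B i x v⟫)
    (hBpos : ∀ i x (d : Euc n), d ≠ 0 → 0 < ⟪d, B i x d⟫)
    (hBcont : ∀ i, Continuous (fun x => B i x))
    (ω τ ζ : ℝ) (hω : 0 < ω)
    (hτ : τ ∈ Set.Ioo (0 : ℝ) 1) (hζ : ζ ∈ Set.Ioo (0 : ℝ) 1)
    (dω : Euc n → Euc n)
    (hmin : ∀ y d, phi g h B ω y (dω y) ≤ phi g h B ω y d)
    (huniq : ∀ y d, (∀ d', phi g h B ω y d ≤ phi g h B ω y d') → d = dω y)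
    (x : ℕ → Euc n) (lam : ℕ → ℝ)
    (hd : ∀ k, dω (x k) ≠ 0)
    (hstep : ∀ k, x (k + 1) = x k + lam k • dω (x k))
    (hlam_form : ∀ k, ∃ j : ℕ, lam k = ζ ^ j)
    (harm : ∀ k i,
      g i (x k + lam k • dω (x k)) + h i (x k + lam k • dω (x k))
        ≤ g i (x k) + h i (x k) + lam k * τ * theta g h B (x k) (dω (x k)))
    (hlam_max : ∀ k (j : ℕ), lam k < ζ ^ j →
      ∃ i, g i (x k) + h i (x k) + ζ ^ j * τ * theta g h B (x k) (dω (x k))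
        < g i (x k + ζ ^ j • dω (x k)) + h i (x k + ζ ^ j • dω (x k)))
    (hlevel : Bornology.IsBounded
      {y : Euc n | ∀ i, g i y + h i y ≤ g i (x 0) + h i (x 0)}) :
    (∃ a : Euc n, MapClusterPt a atTop x) ∧
      ∀ a : Euc n, MapClusterPt a atTop x →
        ParetoStationary (fun i y => g i y + h i y) a :=
  algorithm_one_bounded_level_set_general g h B hm hg hh hBpos hBcont ω τ ζ hω hτ hζ dω hmin x lam
    hstep hlam_form harm hlam_max hlevel
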